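/- (Incremental Lemma, monotonicity of skeptical reasoning.) Let (D,W) be an NMU default theory, let q be a literal and let S be a set of literals such that W ∪ S is consistent and S does not influence q in (D,W). If q is in every extension of (D,W), then q is in every extension of (D, W ∪ S). -/

import Mathlib

/-! Propositional formulas -/

inductive Form (V : Type) : Type
  | atom : V → Form V
  | tru  : Form V
  | fals : Form V
  | neg  : Form V → Form V
  | conj : Form V → Form V → Form V
  | disj : Form V → Form V → Form V

/-- Satisfaction of a formula by a valuation. -/
def Form.sat {V : Type} (v : V → Prop) : Form V → Prop
  | .atom a => v a
  | .tru => True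
  | .fals => False
  | .neg φ => ¬ Form.sat v φ
  | .conj φ ψ => Form.sat v φ ∧ Form.sat v ψ
  | .disj φ ψ => Form.sat v φ ∨ Form.sat v ψ

/-- Logical logClosure `T*` of a set of formulas. -/
def logClosure {V : Type} (T : Set (Form V)) : Set (Form V) :=
  { φ | ∀ v : V → Prop, (∀ ψ ∈ T, Form.sat v ψ) → Form.sat v φ }

/-- A default rule `α : β₁,…,β_m / γ` (`pre = none` means the prerequisite is missing). -/
structure Default (V : Type) : Type where
  pre   : Option (Form V)
  justs : List (Form V)
  concl : Form V

/-- The stage sets `E_i` relative to a candidate extension `E`: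
`E_0 = W`, `E_{i+1} = E_i* ∪ {γ | α:β₁,…,β_m/γ ∈ D, α ∈ E_i, ¬β₁ ∉ E, …, ¬β_m ∉ E}`. -/
def extStage {V : Type} (D : Set (Default V)) (W : Set (Form V)) (E : Set (Form V)) :
    ℕ → Set (Form V)
  | 0 => W
  | i + 1 =>
      logClosure (extStage D W E i) ∪
        { φ | ∃ d ∈ D, d.concl = φ ∧ (∀ a ∈ d.pre, a ∈ extStage D W E i) ∧
              ∀ b ∈ d.justs, Form.neg b ∉ E }

/-- `E` is an extension of the default theory `(D, W)`. -/
def IsExtension {V : Type} (D : Set (Default V)) (W : Set (Form V)) (E : Set (Form V)) : Prop :=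
  E = ⋃ i, extStage D W E i

/-- `(D, W) ⊨ φ`: every extension of `(D, W)` contains `φ`. -/
def entails {V : Type} (D : Set (Default V)) (W : Set (Form V)) (φ : Form V) : Prop :=
  ∀ E, IsExtension D W E → φ ∈ E

/-! Literals -/

/-- A literal: a letter together with a sign (`pos = true` means a positive literal). -/
structure Lit (V : Type) : Type where
  letter : V
  pos : Bool

/-- The formula corresponding to a literal. -/
def Lit.toForm {V : Type} (l : Lit V) : Form V :=
  if l.pos then Form.atom l.letter else Form.neg (Form.atom l.letter)

/-- Negation of a literal (so that `¬¬a = a`). -/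
def Lit.negate {V : Type} (l : Lit V) : Lit V := ⟨l.letter, !l.pos⟩

/-- A set of literals is consistent if it contains no complementary pair. -/
def LitConsistent {V : Type} (S : Set (Lit V)) : Prop := ∀ l ∈ S, l.negate ∉ S

/-! Normal mixed unary (NMU) default theories -/

/-- An NMU default `α : β / β` with `α` empty or a single literal and `β` a single literal. -/
structure NMUDefault (V : Type) : Type where
  pre : Option (Lit V)
  concl : Lit V

/-- The general default rule corresponding to an NMU default. -/
def NMUDefault.toDefault {V : Type} (d : NMUDefault V) : Default V :=
  ⟨d.pre.map Lit.toForm, [d.concl.toForm], d.concl.toForm⟩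

/-- `E` is an extension of the NMU theory `(D, W)`. -/
def NMU.IsExtension {V : Type} (D : Set (NMUDefault V)) (W : Set (Lit V))
    (E : Set (Form V)) : Prop :=
  _root_.IsExtension (NMUDefault.toDefault '' D) (Lit.toForm '' W) E

/-- The NMU theory `(D, W)` entails the literal `l`. -/
def NMU.entails {V : Type} (D : Set (NMUDefault V)) (W : Set (Lit V)) (l : Lit V) : Prop :=
  _root_.entails (NMUDefault.toDefault '' D) (Lit.toForm '' W) l.toForm

/-- An NMU theory is normal unary (NU) if every nonempty prerequisite is positive. -/
def IsNU {V : Type} (D : Set (NMUDefault V)) : Prop :=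
  ∀ d ∈ D, ∀ p ∈ d.pre, p.pos = true

/-! Atomic dependency graph -/

/-- Edge `(x, y)` of the atomic dependency graph: `x` occurs in the prerequisite and `y`
in the consequent of some default of `D`. -/
def depEdge {V : Type} (D : Set (NMUDefault V)) (x y : V) : Prop :=
  ∃ d ∈ D, (∃ p ∈ d.pre, p.letter = x) ∧ d.concl.letter = y

/-- There is a path from `x` to `y` in the atomic dependency graph. -/
def depReach {V : Type} (D : Set (NMUDefault V)) : V → V → Prop :=
  Relation.ReflTransGen (depEdge D)

/-- A set of literals `S` influences a literal `l`. -/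
def influences {V : Type} (D : Set (NMUDefault V)) (S : Set (Lit V)) (l : Lit V) : Prop :=
  ∃ t ∈ S, depReach D t.letter l.letter

/-!
Let `E` be an extension of `(D, W ∪ S)`. The literals derivable from `W` alone with defaults whose
justification holds in `E` form a consistent seed; as `D` and `W` are finite, it extends to a
maximal consistent set `A` of literals all derivable from `W` inside `A`. Maximality makes `A`
closed under the applicable defaults, so the closure of `A` is an extension of `(D, W)` and
`q ∈ A`. Along a derivation of `q` in `A` every letter lies outside the influence of `S`, and then
every default used is also applicable in `E`: a derivation in `E` of the complement of its
consequent would start either from `W`, and so lie in `A`, or from `S`. Hence `q ∈ E`.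
-/

namespace Lit

variable {V : Type}

theorem negate_negate (l : Lit V) : l.negate.negate = l := by
  cases l with | mk a p => cases p <;> rfl

theorem negate_ne (l : Lit V) : l.negate ≠ l := by
  cases l with | mk a p => cases p <;> simp [Lit.negate]

theorem sat_toForm (v : V → Prop) (l : Lit V) :
    Form.sat v l.toForm ↔ (v l.letter ↔ l.pos) := by
  cases l with | mk a p => cases p <;> simp [Lit.toForm, Form.sat]

theorem sat_negate_toForm (v : V → Prop) (l : Lit V) :
    Form.sat v l.negate.toForm ↔ ¬ Form.sat v l.toForm := by
  cases l with | mk a p => cases p <;> simp [Lit.negate, Lit.toForm, Form.sat]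

end Lit

namespace LitConsistent

variable {V : Type} {A B : Set (Lit V)}

theorem mono (hB : LitConsistent B) (h : A ⊆ B) : LitConsistent A :=
  fun l hl hn => hB l (h hl) (h hn)

theorem insert (hA : LitConsistent A) {l : Lit V} (hl : l.negate ∉ A) :
    LitConsistent (insert l A) := by
  rintro m (rfl | hm) (hn | hn)
  · exact m.negate_ne hn
  · exact hl hn
  · exact hl (by rwa [← hn, Lit.negate_negate])
  · exact hA m hm hn

end LitConsistent

section logClosure

variable {V : Type} {T T' : Set (Form V)}

theorem subset_logClosure (T : Set (Form V)) : T ⊆ logClosure T :=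
  fun _ hφ _ hv => hv _ hφ

theorem logClosure_mono (h : T ⊆ T') : logClosure T ⊆ logClosure T' :=
  fun _ hφ v hv => hφ v fun ψ hψ => hv ψ (h hψ)

theorem logClosure_logClosure_subset : logClosure (logClosure T) ⊆ logClosure T :=
  fun _ hφ v hv => hφ v fun _ hψ => hψ v hv

theorem neg_mem_logClosure_of_negate_mem {l : Lit V} (h : l.negate.toForm ∈ T) :
    Form.neg l.toForm ∈ logClosure T :=
  fun v hv => (Lit.sat_negate_toForm v l).mp (hv _ h)

theorem mem_of_toForm_mem_logClosure {X : Set (Lit V)} (hX : LitConsistent X) {l : Lit V}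
    (h : l.toForm ∈ logClosure (Lit.toForm '' X)) : l ∈ X := by
  by_contra hl
  -- a valuation satisfying `X` but not `l`
  let v : V → Prop := fun a => ⟨a, true⟩ ∈ X ∨ l = ⟨a, false⟩
  have hv : ∀ ψ ∈ Lit.toForm '' X, Form.sat v ψ := by
    rintro _ ⟨⟨a, p⟩, hx, rfl⟩
    cases p
    · simp only [Lit.sat_toForm, v, Bool.false_eq_true, iff_false, not_or]
      exact ⟨hX _ hx, fun h => hl (h ▸ hx)⟩
    · exact (Lit.sat_toForm v _).mpr (iff_of_true (Or.inl hx) rfl)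
  have hq := (Lit.sat_toForm v l).mp (h v hv)
  rcases l with ⟨a, _ | _⟩
  · exact absurd (hq.mp (Or.inr rfl)) Bool.false_ne_true
  · rcases hq.mpr rfl with hpos | hne
    exacts [hl hpos, by simp at hne]

theorem negate_mem_of_neg_mem_logClosure {X : Set (Lit V)} (hX : LitConsistent X) {l : Lit V}
    (h : Form.neg l.toForm ∈ logClosure (Lit.toForm '' X)) : l.negate ∈ X :=
  mem_of_toForm_mem_logClosure hX fun v hv => (Lit.sat_negate_toForm v l).mpr (h v hv)

end logClosure

namespace NMU

variable {V : Type} {D : Set (NMUDefault V)} {W W' B B' : Set (Lit V)} {l : Lit V}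

inductive Derivable (D : Set (NMUDefault V)) (W B : Set (Lit V)) : Lit V → Prop
  | base {l : Lit V} : l ∈ W → Derivable D W B l
  | step {d : NMUDefault V} : d ∈ D → (∀ p ∈ d.pre, Derivable D W B p) → d.concl ∈ B →
      Derivable D W B d.concl

/-- The consequents `l` for which the default `α : l / l` passes the justification test
`¬l ∉ E`. -/
def justified (E : Set (Form V)) : Set (Lit V) := {l | Form.neg l.toForm ∉ E}

theorem influences_of_depEdge {S : Set (Lit V)} {p c : Lit V} (hp : influences D S p)
    (hpc : depEdge D p.letter c.letter) : influences D S c :=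
  let ⟨s, hs, hreach⟩ := hp
  ⟨s, hs, hreach.tail hpc⟩

namespace Derivable

theorem mono (hW : W ⊆ W') (hB : B ⊆ B') (h : Derivable D W B l) : Derivable D W' B' l := by
  induction h with
  | base hl => exact base (hW hl)
  | step hd _ hc ih => exact step hd ih (hB hc)

theorem mem_union_filter (h : Derivable D W B l) : l ∈ W ∪ B := by
  cases h with
  | base hl => exact Or.inl hl
  | step _ _ hc => exact Or.inr hc

theorem mem_union_concl (h : Derivable D W B l) : l ∈ W ∪ NMUDefault.concl '' D := by
  cases h with
  | base hl => exact Or.inl hl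
  | step hd _ _ => exact Or.inr ⟨_, hd, rfl⟩

theorem derivable_setOf (h : Derivable D W B l) : Derivable D W {l | Derivable D W B l} l := by
  induction h with
  | base hl => exact base hl
  | step hd hpre hc ih => exact step hd ih (step hd hpre hc)

theorem of_union_or_influences {S : Set (Lit V)} (h : Derivable D (W ∪ S) B l) :
    Derivable D W B l ∨ influences D S l := by
  induction h with
  | base hl => exact hl.imp base fun hS => ⟨_, hS, .refl⟩
  | @step d hd _ hc ih =>
    cases hpre : d.pre with
    | none => exact Or.inl (step hd (by simp [hpre]) hc)
    | some p =>
      rcases ih p hpre with hp | hp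
      · exact Or.inl (step hd (by simpa [hpre] using hp) hc)
      · exact Or.inr (influences_of_depEdge hp ⟨d, hd, ⟨p, hpre, rfl⟩, rfl⟩)

end Derivable

abbrev stage (D : Set (NMUDefault V)) (W : Set (Lit V)) (E : Set (Form V)) (i : ℕ) :
    Set (Form V) :=
  extStage (NMUDefault.toDefault '' D) (Lit.toForm '' W) E i

variable {E : Set (Form V)} {φ : Form V}

theorem mem_stage_succ {i : ℕ} :
    φ ∈ stage D W E (i + 1) ↔ φ ∈ logClosure (stage D W E i) ∨
      ∃ d ∈ D, d.concl.toForm = φ ∧ (∀ p ∈ d.pre, p.toForm ∈ stage D W E i) ∧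
        Form.neg d.concl.toForm ∉ E := by
  simp [stage, extStage, NMUDefault.toDefault]

theorem logClosure_stage_subset (i : ℕ) : logClosure (stage D W E i) ⊆ stage D W E (i + 1) :=
  Set.subset_union_left

theorem stage_mono : Monotone (stage D W E) :=
  monotone_nat_of_le_succ fun i => (subset_logClosure _).trans (logClosure_stage_subset i)

theorem exists_toForm_mem_stage (h : Derivable D W (justified E) l) :
    ∃ i, l.toForm ∈ stage D W E i := by
  induction h with
  | base hl => exact ⟨0, _, hl, rfl⟩
  | @step d hd _ hc ih =>
    cases hpre : d.pre with
    | none => exact ⟨1, mem_stage_succ.mpr (.inr ⟨d, hd, rfl, by simp [hpre], hc⟩)⟩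
    | some p =>
      obtain ⟨i, hi⟩ := ih p hpre
      exact ⟨i + 1, mem_stage_succ.mpr (.inr ⟨d, hd, rfl, by simpa [hpre] using hi, hc⟩)⟩

namespace IsExtension

variable (hE : NMU.IsExtension D W E)
include hE

theorem stage_subset (i : ℕ) : stage D W E i ⊆ E :=
  (Set.subset_iUnion _ i).trans (Eq.subset (Eq.symm hE))

theorem exists_mem_stage (h : φ ∈ E) : ∃ i, φ ∈ stage D W E i :=
  Set.mem_iUnion.mp (Eq.subset hE h)

theorem neg_mem_of_negate_mem (h : l.negate.toForm ∈ E) : Form.neg l.toForm ∈ E := by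
  obtain ⟨i, hi⟩ := exists_mem_stage hE h
  exact stage_subset hE (i + 1) (logClosure_stage_subset i (neg_mem_logClosure_of_negate_mem hi))

theorem toForm_mem_of_derivable (h : Derivable D W (justified E) l) : l.toForm ∈ E := by
  obtain ⟨i, hi⟩ := exists_toForm_mem_stage h
  exact stage_subset hE i hi

/-- The derivable literals are consistent: each of two complementary ones would be derived by a
default whose justification is refuted by the other. -/
theorem derivable_consistent (hW : LitConsistent W) :
    LitConsistent {l | Derivable D W (justified E) l} := by
  intro l hl hn
  rcases hl.mem_union_filter with hlW | hlJ
  · rcases hn.mem_union_filter with hnW | hnJ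
    · exact hW l hlW hnW
    · refine hnJ (neg_mem_of_negate_mem hE ?_)
      rw [Lit.negate_negate]
      exact toForm_mem_of_derivable hE hl
  · exact hlJ (neg_mem_of_negate_mem hE (toForm_mem_of_derivable hE hn))

theorem stage_subset_logClosure (hW : LitConsistent W) (i : ℕ) :
    stage D W E i ⊆ logClosure (Lit.toForm '' {l | Derivable D W (justified E) l}) := by
  induction i with
  | zero => exact (Set.image_mono fun l hl => Derivable.base hl).trans (subset_logClosure _)
  | succ i ih =>
    intro φ hφ
    rcases mem_stage_succ.mp hφ with hφ | ⟨d, hd, rfl, hpre, hj⟩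
    · exact logClosure_logClosure_subset (logClosure_mono ih hφ)
    · refine subset_logClosure _ ⟨d.concl, Derivable.step hd (fun p hp => ?_) hj, rfl⟩
      exact mem_of_toForm_mem_logClosure (derivable_consistent hE hW) (ih (hpre p hp))

theorem derivable_negate_of_neg_mem (hW : LitConsistent W) (h : Form.neg l.toForm ∈ E) :
    Derivable D W (justified E) l.negate := by
  obtain ⟨i, hi⟩ := exists_mem_stage hE h
  exact negate_mem_of_neg_mem_logClosure (derivable_consistent hE hW)
    (stage_subset_logClosure hE hW i hi)

end IsExtension

structure IsLitExtension (D : Set (NMUDefault V)) (W A : Set (Lit V)) : Prop where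
  consistent : LitConsistent A
  subset : W ⊆ A
  derivable : ∀ l ∈ A, Derivable D W A l
  closed : ∀ d ∈ D, (∀ p ∈ d.pre, p ∈ A) → d.concl.negate ∉ A → d.concl ∈ A

namespace IsLitExtension

variable {A : Set (Lit V)} (hA : IsLitExtension D W A)
include hA

theorem finite (hD : D.Finite) (hW : W.Finite) : A.Finite :=
  (hW.union (hD.image _)).subset fun l hl => (hA.derivable l hl).mem_union_concl

theorem stage_subset (i : ℕ) :
    stage D W (logClosure (Lit.toForm '' A)) i ⊆ logClosure (Lit.toForm '' A) := by
  induction i with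
  | zero => exact (Set.image_mono hA.subset).trans (subset_logClosure _)
  | succ i ih =>
    intro φ hφ
    rcases mem_stage_succ.mp hφ with hφ | ⟨d, hd, rfl, hpre, hj⟩
    · exact logClosure_logClosure_subset (logClosure_mono ih hφ)
    · refine subset_logClosure _ ⟨d.concl, hA.closed d hd (fun p hp => ?_) fun hn => ?_, rfl⟩
      · exact mem_of_toForm_mem_logClosure hA.consistent (ih (hpre p hp))
      · exact hj (neg_mem_logClosure_of_negate_mem ⟨_, hn, rfl⟩)

theorem isExtension (hfin : A.Finite) :
    NMU.IsExtension D W (logClosure (Lit.toForm '' A)) := by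
  set E := logClosure (Lit.toForm '' A)
  have hAJ : A ⊆ justified E := fun l hl hn =>
    hA.consistent l hl (negate_mem_of_neg_mem_logClosure hA.consistent hn)
  have hstage : ∀ φ ∈ Lit.toForm '' A, ∃ i, φ ∈ stage D W E i := by
    rintro _ ⟨l, hl, rfl⟩
    exact exists_toForm_mem_stage ((hA.derivable l hl).mono le_rfl hAJ)
  obtain ⟨N, hN⟩ := stage_mono.directed_le.exists_mem_subset_of_finset_subset_biUnion
    (s := (hfin.image Lit.toForm).toFinset) fun φ hφ =>
      Set.mem_iUnion.mpr (hstage φ ((hfin.image _).mem_toFinset.mp hφ))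
  rw [Set.Finite.coe_toFinset] at hN
  refine Set.Subset.antisymm (fun φ hφ => Set.mem_iUnion.mpr ⟨N + 1, ?_⟩)
    (Set.iUnion_subset hA.stage_subset)
  exact logClosure_stage_subset N (logClosure_mono hN hφ)

end IsLitExtension

theorem exists_isLitExtension_superset (hD : D.Finite) (hW : W.Finite) {T : Set (Lit V)}
    (hT : LitConsistent T) (hWT : W ⊆ T) (hTd : ∀ l ∈ T, Derivable D W T l) :
    ∃ A, T ⊆ A ∧ IsLitExtension D W A := by
  let 𝒜 : Set (Set (Lit V)) :=
    {A | LitConsistent A ∧ T ⊆ A ∧ ∀ l ∈ A, Derivable D W A l}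
  have h𝒜 : 𝒜.Finite := (hW.union (hD.image _)).finite_subsets.subset
    fun A hA l hl => (hA.2.2 l hl).mem_union_concl
  obtain ⟨A, hTA, hmax⟩ := h𝒜.exists_le_maximal (a := T) ⟨hT, le_rfl, hTd⟩
  obtain ⟨hAc, -, hAd⟩ := hmax.prop
  refine ⟨A, hTA, hAc, hWT.trans hTA, hAd, fun d hd hpre hn => ?_⟩
  have hins : insert d.concl A ∈ 𝒜 := by
    refine ⟨hAc.insert hn, hTA.trans (Set.subset_insert _ _), ?_⟩
    rintro l (rfl | hl)
    · exact .step hd (fun p hp => (hAd p (hpre p hp)).mono le_rfl (Set.subset_insert _ _))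
        (Set.mem_insert _ _)
    · exact (hAd l hl).mono le_rfl (Set.subset_insert _ _)
  exact hmax.eq_of_subset hins (Set.subset_insert _ _) ▸ Set.mem_insert _ _

/-- The complement of each consequent used would otherwise be derivable in `E` either from `W`,
contradicting the consistency of `A`, or under the influence of `S`. -/
theorem derivable_union_of_not_influences {S A : Set (Lit V)} (hcons : LitConsistent (W ∪ S))
    (hE : NMU.IsExtension D (W ∪ S) E) (hA : LitConsistent A)
    (hJA : ∀ l, Derivable D W (justified E) l → l ∈ A) (hl : Derivable D W A l)
    (hinf : ¬ influences D S l) : Derivable D (W ∪ S) (justified E) l := by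
  induction hl with
  | base hl => exact .base (Or.inl hl)
  | @step d hd _ hc ih =>
    refine .step hd (fun p hp => ih p hp fun hinfp => hinf ?_) fun hneg => ?_
    · exact influences_of_depEdge hinfp ⟨d, hd, ⟨p, hp, rfl⟩, rfl⟩
    · rcases (hE.derivable_negate_of_neg_mem hcons hneg).of_union_or_influences with hW | hS
      · exact hA _ hc (hJA _ hW)
      · exact hinf hS

end NMU

open NMU in
theorem incremental_skeptical_general {V : Type} (D : Set (NMUDefault V)) (W S : Set (Lit V)) (q : Lit V)
    (hD : D.Finite) (hW : W.Finite)
    (hcons : LitConsistent (W ∪ S))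
    (hinf : ¬ influences D S q)
    (h : ∀ E, NMU.IsExtension D W E → q.toForm ∈ E) :
    ∀ E, NMU.IsExtension D (W ∪ S) E → q.toForm ∈ E := by
  intro E hE
  set T := {l | Derivable D W (justified E) l}
  have hT : LitConsistent T := (hE.derivable_consistent hcons).mono
    fun l hl => Derivable.mono Set.subset_union_left le_rfl hl
  obtain ⟨A, hTA, hA⟩ := exists_isLitExtension_superset hD hW hT (fun l hl => .base hl)
    fun l hl => Derivable.derivable_setOf hl
  have hqA : q ∈ A :=
    mem_of_toForm_mem_logClosure hA.consistent (h _ (hA.isExtension (hA.finite hD hW)))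
  exact hE.toForm_mem_of_derivable <|
    derivable_union_of_not_influences hcons hE hA.consistent hTA (hA.derivable q hqA) hinf

/-- Incremental Lemma, monotonicity of skeptical reasoning. -/
theorem incremental_skeptical {V : Type} (D : Set (NMUDefault V)) (W S : Set (Lit V)) (q : Lit V)
    (hD : D.Finite) (hW : W.Finite) (hS : S.Finite)
    (hcons : LitConsistent (W ∪ S))
    (hinf : ¬ influences D S q)
    (h : ∀ E, NMU.IsExtension D W E → q.toForm ∈ E) :
    ∀ E, NMU.IsExtension D (W ∪ S) E → q.toForm ∈ E :=
  incremental_skeptical_general D W S q hD hW hcons hinf h
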